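/- arXiv:2006.13843 — 4 statements merged into one kernel-verified Lean document; each statement's English description precedes it below -/
import Mathlib

section
/- Let (T, χ) be a tree decomposition of a graph, S a subtree of T, and let v, v' be two boundary vertices of S that occur together in the bag χ(t) of some tree node t outside S. Then v and v' also occur together in some bag χ(s) for a node s of S. -/
structure TreeDecomp (V : Type) (I : Type) (G : SimpleGraph V) where
  T : SimpleGraph I
  isTree : T.IsTree
  bag : I → Set V
  cover : ∀ ⦃u v : V⦄, G.Adj u v → ∃ t : I, u ∈ bag t ∧ v ∈ bag t
  conn : ∀ v : V, (T.induce {t : I | v ∈ bag t}).Connected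

/-!
The bags containing `v`, the bags containing `v'` and the nodes of `S` form three pairwise
intersecting subtrees of `T`, so by the Helly property of subtrees they share a node.
The Helly property holds in any forest: walk inside `B` from a point of `B ∩ C` to a point of
`A ∩ B` and stop at the first node `m` of `A`; continuing inside `A` to a point of `C ∩ A` gives a
path between two points of `C`, which is the unique such path and therefore lies in `C`.
-/

namespace SimpleGraph

variable {V : Type*} {G : SimpleGraph V}

namespace Walk

lemma exists_eq_append_of_end_mem {A : Set V} {u v : V} (p : G.Walk u v) (hv : v ∈ A) :
    ∃ m ∈ A, ∃ (q : G.Walk u m) (r : G.Walk m v),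
      p = q.append r ∧ ∀ x ∈ q.support, x ∈ A → x = m := by
  induction p with
  | nil => exact ⟨_, hv, nil, nil, rfl, by simp⟩
  | @cons u w v huw p ih =>
    by_cases hu : u ∈ A
    · exact ⟨u, hu, nil, cons huw p, rfl, by simp⟩
    · obtain ⟨m, hm, q, r, rfl, hq⟩ := ih hv
      refine ⟨m, hm, cons huw q, r, rfl, fun x hx hxA => ?_⟩
      rcases List.mem_cons.mp hx with rfl | hx
      · exact absurd hxA hu
      · exact hq x hx hxA

lemma IsPath.append_of_support_inter {u m w : V} {q : G.Walk u m} {s : G.Walk m w}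
    (hq : q.IsPath) (hs : s.IsPath) (hqs : ∀ x ∈ q.support, x ∈ s.support → x = m) :
    (q.append s).IsPath := by
  rw [isPath_def, support_append]
  have hs' : m ∉ s.support.tail ∧ s.support.tail.Nodup := by
    rw [← List.nodup_cons, s.cons_tail_support]
    exact hs.support_nodup
  refine hq.support_nodup.append hs'.2 fun x hxq hxs => hs'.1 ?_
  exact hqs x hxq (List.mem_of_mem_tail hxs) ▸ hxs

end Walk

lemma Connected.exists_isPath_of_induce {A : Set V} (hA : (G.induce A).Connected) {a b : V}
    (ha : a ∈ A) (hb : b ∈ A) : ∃ p : G.Walk a b, p.IsPath ∧ ∀ x ∈ p.support, x ∈ A := by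
  obtain ⟨p, hp⟩ := (hA ⟨a, ha⟩ ⟨b, hb⟩).exists_isPath
  let e : G.induce A ↪g G := Embedding.induce A
  have hpA : ∀ x ∈ (p.map e.toHom).support, x ∈ A := by
    intro x hx
    rw [Walk.support_map, List.mem_map] at hx
    obtain ⟨y, -, rfl⟩ := hx
    exact y.2
  exact ⟨p.map e.toHom, hp.map e.injective, hpA⟩

lemma IsAcyclic.support_subset_of_connected_induce (hG : G.IsAcyclic) {A : Set V}
    (hA : (G.induce A).Connected) {a b : V} {p : G.Walk a b} (hp : p.IsPath)
    (ha : a ∈ A) (hb : b ∈ A) : ∀ x ∈ p.support, x ∈ A := by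
  obtain ⟨p', hp', hp'A⟩ := hA.exists_isPath_of_induce ha hb
  obtain rfl : p = p' := congrArg Subtype.val ((hG.subsingleton_path a b).elim ⟨p, hp⟩ ⟨p', hp'⟩)
  exact hp'A

theorem IsAcyclic.inter_nonempty_of_connected_induce (hG : G.IsAcyclic) {A B C : Set V}
    (hA : (G.induce A).Connected) (hB : (G.induce B).Connected) (hC : (G.induce C).Connected)
    (hAB : (A ∩ B).Nonempty) (hBC : (B ∩ C).Nonempty) (hCA : (C ∩ A).Nonempty) :
    (A ∩ B ∩ C).Nonempty := by
  obtain ⟨x, hxA, hxB⟩ := hAB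
  obtain ⟨y, hyB, hyC⟩ := hBC
  obtain ⟨z, hzC, hzA⟩ := hCA
  obtain ⟨p, hp, hpB⟩ := hB.exists_isPath_of_induce hyB hxB
  obtain ⟨m, hmA, q, r, rfl, hqA⟩ := p.exists_eq_append_of_end_mem hxA
  obtain ⟨s, hs, hsA⟩ := hA.exists_isPath_of_induce hmA hzA
  have hqs : (q.append s).IsPath :=
    hp.of_append_left.append_of_support_inter hs fun x hxq hxs => hqA x hxq (hsA x hxs)
  refine ⟨m, ⟨hmA, hpB m (by simp)⟩, ?_⟩
  exact hG.support_subset_of_connected_induce hC hqs hyC hzC m (by simp)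

end SimpleGraph

theorem stmt_1_general {V I : Type} (G : SimpleGraph V)
    (td : TreeDecomp V I G) (S : Set I) (hS : (td.T.induce S).Connected)
    (v v' : V)
    (hv : v ∈ ⋃ t ∈ S, td.bag t) (hv' : v' ∈ ⋃ t ∈ S, td.bag t)
    (t : I) (hvt : v ∈ td.bag t) (hv't : v' ∈ td.bag t) :
    ∃ s ∈ S, v ∈ td.bag s ∧ v' ∈ td.bag s := by
  simp only [Set.mem_iUnion] at hv hv'
  obtain ⟨s, hsS, hvs⟩ := hv
  obtain ⟨s', hs'S, hv's'⟩ := hv'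
  obtain ⟨m, ⟨hmS, hvm⟩, hv'm⟩ := td.isTree.isAcyclic.inter_nonempty_of_connected_induce
    hS (td.conn v) (td.conn v') ⟨s, hsS, hvs⟩ ⟨t, hvt, hv't⟩ ⟨s', hv's', hs'S⟩
  exact ⟨m, hmS, hvm, hv'm⟩

/-- If two boundary vertices `v, v'` of the subtree `S` occur together in the
bag of a tree node `t` outside `S`, then they also occur together in some bag
of a node of `S`. -/
theorem stmt_1 {V I : Type} [Fintype V] [Fintype I] (G : SimpleGraph V)
    (td : TreeDecomp V I G) (S : Set I) (hS : (td.T.induce S).Connected)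
    (v v' : V)
    (hv : v ∈ ⋃ t ∈ S, td.bag t) (hv' : v' ∈ ⋃ t ∈ S, td.bag t)
    (t : I) (ht : t ∉ S) (hvt : v ∈ td.bag t) (hv't : v' ∈ td.bag t) :
    ∃ s ∈ S, v ∈ td.bag s ∧ v' ∈ td.bag s :=
  stmt_1_general G td S hS v v' hv hv' t hvt hv't
end

section
/- Let D be a directed acyclic graph on vertex set V, let V_S ⊆ V, and suppose D' is obtained from D by replacing the in-neighborhoods (parent sets) of vertices in V_S, while vertices outside V_S keep their parent sets. Suppose (i) the induced subdigraph D'[V_S] is acyclic, and (ii) the digraph on V_S whose arc set is the arcs of D'[V_S] together with all virtual arcs (pairs (v', v) with v', v ∈ V_S such that D' has a directed path from v' to v all of whose internal vertices lie outside V_S) is acyclic. Then D' is acyclic. -/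
/-- A digraph (given by its arc relation `E`) is acyclic if no vertex lies on a
directed cycle. -/
def Acyclic {V : Type} (E : V → V → Prop) : Prop :=
  ∀ v : V, ¬ Relation.TransGen E v v

/-- `DirPathOutside E S a b` holds if there is a directed path in `E` from `a`
to `b` (with at least one arc) all of whose internal vertices lie outside `S`. -/
def DirPathOutside {V : Type} (E : V → V → Prop) (S : Set V) (a b : V) : Prop :=
  ∃ l : List V, (∀ x ∈ l, x ∉ S) ∧ List.Chain E a (l ++ [b])

/-!
A cycle of `D'` through a vertex of `V_S` is cut by its vertices in `V_S` into paths with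
all internal vertices outside `V_S`, i.e. into virtual arcs, so it yields a cycle of virtual
arcs. A cycle of `D'` avoiding `V_S` uses only parent sets of vertices outside `V_S`, which
are those of `D`, so it is a cycle of `D`.
-/

section

variable {V : Type} (E : V → V → Prop) (S : Set V)

def VirtualArc (u v : V) : Prop :=
  u ∈ S ∧ v ∈ S ∧ DirPathOutside E S u v

variable {E S}

theorem DirPathOutside.of_rel {a b : V} (h : E a b) : DirPathOutside E S a b :=
  ⟨[], by simp, .cons_cons h (.singleton b)⟩

theorem DirPathOutside.head {a c b : V} (hac : E a c) (hc : c ∉ S)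
    (hcb : DirPathOutside E S c b) : DirPathOutside E S a b := by
  obtain ⟨l, hl, hchain⟩ := hcb
  exact ⟨c :: l, List.forall_mem_cons.mpr ⟨hc, hl⟩, .cons_cons hac hchain⟩

theorem exists_dirPathOutside_reflTransGen_virtualArc {a b : V} (hb : b ∈ S)
    (hab : Relation.TransGen E a b) :
    ∃ c ∈ S, DirPathOutside E S a c ∧ Relation.ReflTransGen (VirtualArc E S) c b := by
  induction hab using Relation.TransGen.head_induction_on with
  | single h => exact ⟨b, hb, .of_rel h, .refl⟩
  | @head a c hac _ ih =>
    obtain ⟨d, hd, hcd, hdb⟩ := ih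
    by_cases hc : c ∈ S
    · exact ⟨c, hc, .of_rel hac, .head ⟨hc, hd, hcd⟩ hdb⟩
    · exact ⟨d, hd, hcd.head hac hc, hdb⟩

theorem transGen_virtualArc_of_transGen {a b : V} (ha : a ∈ S) (hb : b ∈ S)
    (hab : Relation.TransGen E a b) : Relation.TransGen (VirtualArc E S) a b :=
  let ⟨_, hc, hac, hcb⟩ := exists_dirPathOutside_reflTransGen_virtualArc hb hab
  .head' ⟨ha, hc, hac⟩ hcb

theorem transGen_or_exists_mem_of_transGen {E' : V → V → Prop}
    (hout : ∀ v ∉ S, ∀ u, E' u v → E u v) {a b : V} (hb : b ∉ S)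
    (hab : Relation.TransGen E' a b) :
    Relation.TransGen E a b ∨
      ∃ c ∈ S, Relation.TransGen E' a c ∧ Relation.TransGen E' c b := by
  induction hab using Relation.TransGen.head_induction_on with
  | single h => exact .inl (.single (hout b hb _ h))
  | @head a c hac hcb ih =>
    by_cases hc : c ∈ S
    · exact .inr ⟨c, hc, .single hac, hcb⟩
    · rcases ih with hcb' | ⟨d, hd, hcd, hdb⟩
      · exact .inl (.head (hout c hc a hac) hcb')
      · exact .inr ⟨d, hd, .head hac hcd, hdb⟩

end

theorem stmt_4_general {V : Type} (E E' : V → V → Prop) (VS : Set V)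
    (hD : Acyclic E)
    (hout : ∀ v ∉ VS, ∀ u, E' u v ↔ E u v)
    (h2 : Acyclic (fun u v =>
      (u ∈ VS ∧ v ∈ VS ∧ E' u v) ∨
      (u ∈ VS ∧ v ∈ VS ∧ DirPathOutside E' VS u v))) :
    Acyclic E' := by
  have hVS : ∀ c ∈ VS, ¬ Relation.TransGen E' c c := fun c hc hcc =>
    h2 c (Relation.TransGen.mono (fun _ _ => Or.inr) _ _
      (transGen_virtualArc_of_transGen hc hc hcc))
  intro v hv
  by_cases hvS : v ∈ VS
  · exact hVS v hvS hv
  · rcases transGen_or_exists_mem_of_transGen (fun w hw u => (hout w hw u).mp) hvS hv with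
      hE | ⟨c, hc, hvc, hcv⟩
    · exact hD v hE
    · exact hVS c hc (hcv.trans hvc)

/-- If `D'` agrees with the DAG `D` on parent sets of vertices outside `V_S`,
the induced subdigraph `D'[V_S]` is acyclic, and the digraph on `V_S` consisting
of the arcs of `D'[V_S]` together with all virtual arcs is acyclic, then `D'` is
acyclic. -/
theorem stmt_4 {V : Type} [Fintype V] (E E' : V → V → Prop) (VS : Set V)
    (hD : Acyclic E)
    (hout : ∀ v ∉ VS, ∀ u, E' u v ↔ E u v)
    (h1 : Acyclic (fun u v => u ∈ VS ∧ v ∈ VS ∧ E' u v))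
    (h2 : Acyclic (fun u v =>
      (u ∈ VS ∧ v ∈ VS ∧ E' u v) ∨
      (u ∈ VS ∧ v ∈ VS ∧ DirPathOutside E' VS u v))) :
    Acyclic E' :=
  stmt_4_general E E' VS hD hout h2
end

section
/- Let G be a graph with tree decomposition (T, χ), S a subtree of T with vertex set V_S = ⋃_{t ∈ V(S)} χ(t), and let G' be a graph on V_S such that there is a tree decomposition (S', χ') of width ≤ W of the graph obtained from G' by adding all virtual edges (pairs of vertices in V_S occurring together in some bag outside S). Suppose the width of (T, χ) is ≤ W. Then the graph H on V obtained from G by replacing all edges within V_S by the edges of G' (keeping all edges of G with at least one endpoint outside V_S that are covered by bags outside S) has treewidth at most W. -/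
/-!
Delete the nodes of `S` from `T` and put the tree of `td'` in their place. Since `T` is a tree
and `S` is connected, every component of `T - S` contains exactly one node `t` adjacent to `S`
(two such nodes would close a cycle through `S`); attach it to a node of the new tree whose bag
contains `bag t ∩ V_S`. Such a node exists: that set is a clique of virtual edges, and a clique
lies in a common bag by the Helly property of subtrees. Bridge arguments show that the glued graph
is again a tree, and a vertex of `V_S` keeps a connected set of nodes because the attachment
node of `t` contains every vertex of `V_S` in `bag t`.
-/

/-- A tree decomposition of a graph `G` whose relevant vertex set is `U ⊆ V`:
`T` is a tree, bags are subsets of `U`, every edge of `G` is contained in some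
bag, and for every vertex of `U` the tree nodes whose bag contains it induce a
nonempty connected subtree of `T`. -/
structure TreeDecompOn (V : Type) (I : Type) (U : Set V) (G : SimpleGraph V) where
  T : SimpleGraph I
  isTree : T.IsTree
  bag : I → Set V
  bag_sub : ∀ t : I, bag t ⊆ U
  cover : ∀ ⦃u v : V⦄, G.Adj u v → ∃ t : I, u ∈ bag t ∧ v ∈ bag t
  conn : ∀ v ∈ U, (T.induce {t : I | v ∈ bag t}).Connected

namespace SimpleGraph

section General

variable {α : Type*} {G : SimpleGraph α}

lemma Reachable.exists_walk_of_induce {A : Set α} {a b : A} (h : (G.induce A).Reachable a b) :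
    ∃ w : G.Walk a b, ∀ x ∈ w.support, x ∈ A := by
  obtain ⟨w⟩ := h
  refine ⟨w.map (Embedding.induce A).toHom, fun x hx => ?_⟩
  obtain ⟨y, -, rfl⟩ := List.mem_map.mp (Walk.support_map _ w ▸ hx)
  exact y.2

lemma Connected.exists_walk_of_induce {A : Set α} (h : (G.induce A).Connected) {a b : α}
    (ha : a ∈ A) (hb : b ∈ A) : ∃ w : G.Walk a b, ∀ x ∈ w.support, x ∈ A :=
  (h.preconnected ⟨a, ha⟩ ⟨b, hb⟩).exists_walk_of_induce

lemma Walk.exists_adj_mem_of_notMem {A : Set α} {a b : α} (w : G.Walk a b) (ha : a ∉ A)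
    (hb : b ∈ A) : ∃ x y, G.Adj x y ∧ y ∈ A ∧
      ∃ p : G.Walk a x, ∀ z ∈ p.support, z ∉ A ∧ z ∈ w.support := by
  induction w with
  | nil => exact absurd hb ha
  | @cons a c _ hac w ih =>
    by_cases hc : c ∈ A
    · exact ⟨a, c, hac, hc, .nil, by simp [ha]⟩
    · obtain ⟨x, y, hxy, hy, p, hp⟩ := ih hc hb
      refine ⟨x, y, hxy, hy, .cons hac p, fun z hz => ?_⟩
      rcases List.mem_cons.mp hz with rfl | hz
      · simp [ha]
      · simp [hp z hz]

lemma IsAcyclic.mem_edges_of_adj (hG : G.IsAcyclic) {a b : α} (h : G.Adj a b)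
    (p : G.Walk a b) : s(a, b) ∈ p.edges :=
  isBridge_iff_forall_walk_mem_edges.mp (isAcyclic_iff_forall_adj_isBridge.mp hG h) p

lemma isBridge_of_forall_adj_mem_notMem {a b : α} (P : Set α) (ha : a ∈ P) (hb : b ∉ P)
    (hcut : ∀ ⦃x y⦄, G.Adj x y → x ∈ P → y ∉ P → x = a ∧ y = b) : G.IsBridge s(a, b) := by
  refine isBridge_iff_forall_walk_mem_edges.mpr fun p => ?_
  obtain ⟨d, hd, hdP, hdP'⟩ := p.exists_boundary_dart P ha hb
  obtain ⟨rfl, rfl⟩ := hcut d.adj hdP hdP'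
  exact List.mem_map_of_mem hd

theorem IsTree.exists_forall_mem_of_pairwise_nonempty {ι : Type*} (hG : G.IsTree)
    (A : ι → Set α) (F : Finset ι) (hconn : ∀ i ∈ F, (G.induce (A i)).Connected)
    (hpair : ∀ i ∈ F, ∀ j ∈ F, (A i ∩ A j).Nonempty) : ∃ x, ∀ i ∈ F, x ∈ A i := by
  classical
  induction F using Finset.induction with
  | empty => exact ⟨hG.connected.nonempty.some, by simp⟩
  | @insert u F _ ih =>
    simp only [Finset.mem_insert, forall_eq_or_imp] at hconn hpair ⊢
    obtain ⟨x, hx⟩ := ih hconn.2 fun i hi j hj => hpair.2 i hi |>.2 j hj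
    by_cases hxu : x ∈ A u
    · exact ⟨x, hxu, hx⟩
    obtain ⟨j₀, hj₀⟩ := hconn.1.nonempty
    obtain ⟨y', y, hy'y, hy, p, hp⟩ := (hG.connected.preconnected x j₀).some
      |>.exists_adj_mem_of_notMem hxu hj₀
    refine ⟨y, hy, fun i hi => ?_⟩
    by_contra hyi
    obtain ⟨j, hji, hju⟩ := (hpair.2 i hi).1
    obtain ⟨w, hw⟩ := (hconn.2 i hi).exists_walk_of_induce (hx i hi) hji
    obtain ⟨m, hm⟩ := hconn.1.exists_walk_of_induce hju hy
    -- the walk `y' → x → j → y` would avoid the edge `y'y`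
    have := hG.isAcyclic.mem_edges_of_adj hy'y (p.reverse.append (w.append m))
    simp only [Walk.edges_append, Walk.edges_reverse, List.mem_append, List.mem_reverse] at this
    rcases this with h | h | h
    · exact (hp y (p.snd_mem_support_of_mem_edges h)).1 hy
    · exact hyi (hw y (w.snd_mem_support_of_mem_edges h))
    · exact (hp y' p.end_mem_support).1 (hm y' (m.fst_mem_support_of_mem_edges h))

end General

section replaceSubtree

open Sum

variable {ι κ : Type*} (T : SimpleGraph ι) (S : Set ι) (T' : SimpleGraph κ) (f : ↥Sᶜ → κ)

def replaceSubtree : SimpleGraph (κ ⊕ ↥Sᶜ) where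
  Adj
    | inl j, inl j' => T'.Adj j j'
    | inr t, inr t' => T.Adj t t'
    | inl j, inr t | inr t, inl j => (∃ s ∈ S, T.Adj t s) ∧ j = f t
  symm := ⟨by rintro (j | t) (j' | t') h <;> first | exact h | exact h.symm⟩
  loopless := ⟨by rintro (j | t) h <;> exact SimpleGraph.irrefl _ h⟩

namespace replaceSubtree

def inlHom : T' →g T.replaceSubtree S T' f where
  toFun := inl
  map_rel' h := h

def inrHom : T.induce Sᶜ →g T.replaceSubtree S T' f where
  toFun := inr
  map_rel' h := h

variable {T S T' f}

lemma exists_reachable_adj (hT : T.Connected) (hS : S.Nonempty) (t : ↥Sᶜ) :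
    ∃ b : ↥Sᶜ, (T.induce Sᶜ).Reachable t b ∧ ∃ s ∈ S, T.Adj b s := by
  obtain ⟨s₀, hs₀⟩ := hS
  obtain ⟨x, y, hxy, hy, p, hp⟩ := (hT.preconnected t s₀).some.exists_adj_mem_of_notMem t.2 hs₀
  exact ⟨⟨x, (hp x p.end_mem_support).1⟩, (p.induce Sᶜ fun z hz => (hp z hz).1).reachable,
    y, hy, hxy⟩

lemma eq_of_reachable_of_adj (hT : T.IsAcyclic) (hS : (T.induce S).Connected) {b b' : ↥Sᶜ}
    (hbb' : (T.induce Sᶜ).Reachable b b') (hb : ∃ s ∈ S, T.Adj b s)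
    (hb' : ∃ s ∈ S, T.Adj b' s) : b = b' := by
  obtain ⟨s, hs, hbs⟩ := hb
  obtain ⟨s', hs', hbs'⟩ := hb'
  obtain ⟨w, hw⟩ := hbb'.exists_walk_of_induce
  obtain ⟨m, hm⟩ := hS.exists_walk_of_induce hs' hs
  by_contra hne
  -- the walk `b → b' → s' → s` would avoid the edge `bs`
  have := hT.mem_edges_of_adj hbs (w.append (.cons hbs' m))
  simp only [Walk.edges_append, Walk.edges_cons, List.mem_append, List.mem_cons,
    Sym2.eq_iff] at this
  rcases this with h | (⟨h, -⟩ | ⟨h, -⟩) | h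
  · exact hw s (w.snd_mem_support_of_mem_edges h) hs
  · exact hne (Subtype.ext h)
  · exact b.2 (h ▸ hs')
  · exact b.2 (hm b (m.fst_mem_support_of_mem_edges h))

lemma isBridge_inr_inl (hT : T.IsAcyclic) (hS : (T.induce S).Connected) {t : ↥Sᶜ}
    (ht : ∃ s ∈ S, T.Adj t s) : (T.replaceSubtree S T' f).IsBridge s(inr t, inl (f t)) := by
  refine isBridge_of_forall_adj_mem_notMem (inr '' {x | (T.induce Sᶜ).Reachable t x})
    ⟨t, .refl t, rfl⟩ (by simp) ?_
  rintro (x | x) (y | y) hxy hxP hyP <;> simp only [Set.mem_image, Set.mem_ofPred_eq,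
    reduceCtorEq, and_false, exists_false, inr.injEq, exists_eq_right] at hxP hyP
  · obtain ⟨hx, rfl⟩ := hxy
    obtain rfl := eq_of_reachable_of_adj hT hS hxP ht hx
    exact ⟨rfl, rfl⟩
  · exact absurd (hxP.trans (Adj.reachable hxy)) hyP

lemma isBridge_inl_inl (hT : T.IsAcyclic) (hS : (T.induce S).Connected) (hT' : T'.IsAcyclic)
    {j j' : κ} (hjj' : T'.Adj j j') : (T.replaceSubtree S T' f).IsBridge s(inl j, inl j') := by
  set E := T'.deleteEdges {s(j, j')}
  have hE : ¬E.Reachable j j' := isBridge_iff.mp (isAcyclic_iff_forall_adj_isBridge.mp hT' hjj')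
  have hEadj {x y : κ} (hxy : T'.Adj x y) (hne : s(x, y) ≠ s(j, j')) : E.Adj x y :=
    deleteEdges_adj.mpr ⟨hxy, hne⟩
  -- the side of `j`, together with the components of `T - S` attached to it
  refine isBridge_of_forall_adj_mem_notMem {k | k.elim (E.Reachable j) fun t =>
      ∃ b, (T.induce Sᶜ).Reachable t b ∧ (∃ s ∈ S, T.Adj b s) ∧ E.Reachable j (f b)}
    (.refl j) hE ?_
  rintro (x | x) (y | y) hxy hxP hyP <;>
    simp only [Set.mem_ofPred_eq, elim_inl, elim_inr] at hxP hyP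
  · by_cases hne : s(x, y) = s(j, j')
    · rcases Sym2.eq_iff.mp hne with ⟨rfl, rfl⟩ | ⟨rfl, rfl⟩
      · exact ⟨rfl, rfl⟩
      · exact absurd (.refl _) hyP
    · exact absurd (hxP.trans (hEadj hxy hne).reachable) hyP
  · obtain ⟨hy, rfl⟩ := hxy
    exact absurd ⟨y, .refl y, hy, hxP⟩ hyP
  · obtain ⟨hx, rfl⟩ := hxy
    obtain ⟨b, hxb, hb, hjb⟩ := hxP
    obtain rfl := eq_of_reachable_of_adj hT hS hxb hx hb
    exact absurd hjb hyP
  · obtain ⟨b, hxb, hb⟩ := hxP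
    exact absurd ⟨b, (Adj.reachable (G := T.induce Sᶜ) hxy).symm.trans hxb, hb⟩ hyP

lemma isBridge_inr_inr_of_forall_not_adj (hT : T.IsAcyclic) {t t' : ↥Sᶜ} (htt' : T.Adj t t')
    (hside : ∀ x, ((T.induce Sᶜ).deleteEdges {s(t, t')}).Reachable t x → ¬∃ s ∈ S, T.Adj x s) :
    (T.replaceSubtree S T' f).IsBridge s(inr t, inr t') := by
  set D := (T.induce Sᶜ).deleteEdges {s(t, t')}
  refine isBridge_of_forall_adj_mem_notMem (inr '' {x | D.Reachable t x})
    ⟨t, .refl t, rfl⟩ ?_ ?_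
  · simpa using isBridge_iff.mp (isAcyclic_iff_forall_adj_isBridge.mp (hT.induce Sᶜ) htt')
  rintro (x | x) (y | y) hxy hxP hyP <;> simp only [Set.mem_image, Set.mem_ofPred_eq,
    reduceCtorEq, and_false, exists_false, inr.injEq, exists_eq_right] at hxP hyP
  · exact absurd hxy.1 (hside x hxP)
  · by_cases hne : s(x, y) = s(t, t')
    · rcases Sym2.eq_iff.mp hne with ⟨rfl, rfl⟩ | ⟨rfl, rfl⟩
      · exact ⟨rfl, rfl⟩
      · exact absurd (.refl _) hyP
    · exact absurd (hxP.trans ((deleteEdges_adj (G := T.induce Sᶜ)).mpr ⟨hxy, hne⟩).reachable) hyP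

lemma isBridge_inr_inr (hT : T.IsAcyclic) (hS : (T.induce S).Connected) {t t' : ↥Sᶜ}
    (htt' : T.Adj t t') : (T.replaceSubtree S T' f).IsBridge s(inr t, inr t') := by
  set D := (T.induce Sᶜ).deleteEdges {s(t, t')}
  have hD : ¬D.Reachable t t' :=
    isBridge_iff.mp (isAcyclic_iff_forall_adj_isBridge.mp (hT.induce Sᶜ) htt')
  -- at most one side of `tt'` in `T - S` contains a node adjacent to `S`
  by_cases hside : ∃ b, D.Reachable t b ∧ ∃ s ∈ S, T.Adj b s
  swap
  · exact isBridge_inr_inr_of_forall_not_adj hT htt' fun b htb hb => hside ⟨b, htb, hb⟩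
  obtain ⟨b, htb, hb⟩ := hside
  rw [Sym2.eq_swap]
  refine isBridge_inr_inr_of_forall_not_adj hT htt'.symm fun b' ht'b' hb' => ?_
  rw [Sym2.eq_swap] at ht'b'
  obtain rfl := eq_of_reachable_of_adj hT hS ((htb.mono (deleteEdges_le _)).symm.trans
    ((Adj.reachable (G := T.induce Sᶜ) htt').trans (ht'b'.mono (deleteEdges_le _)))) hb hb'
  exact hD (htb.trans ht'b'.symm)

end replaceSubtree

open replaceSubtree

variable {T S T' f}

theorem IsAcyclic.replaceSubtree (hT : T.IsAcyclic) (hS : (T.induce S).Connected)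
    (hT' : T'.IsAcyclic) : (T.replaceSubtree S T' f).IsAcyclic := by
  refine isAcyclic_iff_forall_adj_isBridge.mpr ?_
  rintro (j | t) (j' | t') h
  · exact isBridge_inl_inl hT hS hT' h
  · obtain ⟨ht', rfl⟩ := h
    exact Sym2.eq_swap ▸ isBridge_inr_inl hT hS ht'
  · obtain ⟨ht, rfl⟩ := h
    exact isBridge_inr_inl hT hS ht
  · exact isBridge_inr_inr hT hS h

theorem Connected.replaceSubtree (hT : T.Connected) (hS : S.Nonempty) (hT' : T'.Connected) :
    (T.replaceSubtree S T' f).Connected := by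
  obtain ⟨j₀⟩ := hT'.nonempty
  refine (connected_iff_exists_forall_reachable _).mpr ⟨inl j₀, ?_⟩
  rintro (j | t)
  · exact (hT'.preconnected j₀ j).map (inlHom T S T' f)
  · obtain ⟨b, htb, hb⟩ := exists_reachable_adj hT hS t
    have hbf : (T.replaceSubtree S T' f).Adj (inl (f b)) (inr b) := ⟨hb, rfl⟩
    exact ((hT'.preconnected j₀ (f b)).map (inlHom T S T' f)).trans
      (hbf.reachable.trans (htb.map (inrHom T S T' f)).symm)

theorem IsTree.replaceSubtree (hT : T.IsTree) (hS : (T.induce S).Connected) (hT' : T'.IsTree) :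
    (T.replaceSubtree S T' f).IsTree :=
  ⟨hT.connected.replaceSubtree (Set.nonempty_coe_sort.mp hS.nonempty) hT'.connected,
    hT.isAcyclic.replaceSubtree hS hT'.isAcyclic⟩

end replaceSubtree

end SimpleGraph

namespace TreeDecompOn

open SimpleGraph Sum replaceSubtree

variable {V I J : Type} {U : Set V} {G G₁ : SimpleGraph V}

lemma exists_subset_bag (td : TreeDecompOn V I U G) {X : Set V} (hX : X.Finite) (hXU : X ⊆ U)
    (hXG : G.IsClique X) : ∃ t, X ⊆ td.bag t := by
  have hpair : ∀ u ∈ X, ∀ v ∈ X, ∃ t, u ∈ td.bag t ∧ v ∈ td.bag t := by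
    intro u hu v hv
    obtain rfl | huv := eq_or_ne u v
    · obtain ⟨⟨t, ht⟩⟩ := (td.conn u (hXU hu)).nonempty
      exact ⟨t, ht, ht⟩
    · exact td.cover (hXG hu hv huv)
  obtain ⟨t, ht⟩ := td.isTree.exists_forall_mem_of_pairwise_nonempty (fun v => {t | v ∈ td.bag t})
    hX.toFinset (fun v hv => td.conn v (hXU (hX.mem_toFinset.mp hv)))
    fun u hu v hv => hpair u (hX.mem_toFinset.mp hu) v (hX.mem_toFinset.mp hv)
  exact ⟨t, fun v hv => ht v (hX.mem_toFinset.mpr hv)⟩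

def ofLE (td : TreeDecompOn V I U G) {H : SimpleGraph V} (h : H ≤ G) : TreeDecompOn V I U H :=
  { td with cover := fun _ _ huv => td.cover (h huv) }

variable (td : TreeDecompOn V I Set.univ G) {S : Set I}
  (td' : TreeDecompOn V J (⋃ s ∈ S, td.bag s) G₁) (f : ↥Sᶜ → J)

lemma connected_induce_replaceSubtree
    (hf : ∀ t : ↥Sᶜ, td.bag t ∩ (⋃ s ∈ S, td.bag s) ⊆ td'.bag (f t)) (v : V) :
    ((td.T.replaceSubtree S td'.T f).induce
      {k : J ⊕ ↥Sᶜ | v ∈ Sum.elim td'.bag (fun t : ↥Sᶜ => td.bag t) k}).Connected := by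
  set R := td.T.replaceSubtree S td'.T f
  set N := {k : J ⊕ ↥Sᶜ | v ∈ Sum.elim td'.bag (fun t : ↥Sᶜ => td.bag t) k}
  have hinl {a b : {j | v ∈ td'.bag j}} (h : (td'.T.induce {j | v ∈ td'.bag j}).Reachable a b) :
      (R.induce N).Reachable ⟨inl a, a.2⟩ ⟨inl b, b.2⟩ :=
    h.map (induceHom (inlHom td.T S td'.T f) fun _ hj => hj)
  have hinr {a b : I} (p : td.T.Walk a b) (hp : ∀ x ∈ p.support, x ∉ S ∧ v ∈ td.bag x) :
      (R.induce N).Reachable ⟨inr ⟨a, (hp a p.start_mem_support).1⟩, (hp a p.start_mem_support).2⟩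
        ⟨inr ⟨b, (hp b p.end_mem_support).1⟩, (hp b p.end_mem_support).2⟩ := by
    have hN : ∀ k ∈ ((p.induce Sᶜ fun x hx => (hp x hx).1).map (inrHom td.T S td'.T f)).support,
        k ∈ N := by
      simp only [Walk.support_map, Walk.support_induce, List.mem_map, List.mem_attachWith]
      rintro _ ⟨x, hx, rfl⟩
      exact (hp x hx).2
    exact (((p.induce Sᶜ _).map (inrHom td.T S td'.T f)).induce N hN).reachable
  by_cases hv : v ∈ ⋃ s ∈ S, td.bag s
  · have hT'v := td'.conn v hv
    obtain ⟨j₀, hj₀⟩ := hT'v.nonempty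
    refine (connected_iff_exists_forall_reachable _).mpr ⟨⟨inl j₀, hj₀⟩, ?_⟩
    rintro ⟨j | t, hk⟩
    · exact hinl (hT'v.preconnected ⟨j₀, hj₀⟩ ⟨j, hk⟩)
    obtain ⟨s₀, hs₀, hvs₀⟩ := Set.mem_iUnion₂.mp hv
    obtain ⟨w, hw⟩ := (td.conn v trivial).exists_walk_of_induce (show v ∈ td.bag t from hk) hvs₀
    -- on a walk in `T_v` from `t` into `S`, the last node `d` before `S` is attached at `f d`
    obtain ⟨d, s, hds, hs, p, hp⟩ := w.exists_adj_mem_of_notMem t.2 hs₀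
    have hpv : ∀ x ∈ p.support, x ∉ S ∧ v ∈ td.bag x :=
      fun x hx => ⟨(hp x hx).1, hw x (hp x hx).2⟩
    have hd : v ∈ td'.bag (f ⟨d, (hpv d p.end_mem_support).1⟩) :=
      hf _ ⟨(hpv d p.end_mem_support).2, hv⟩
    exact (hinl (hT'v.preconnected ⟨j₀, hj₀⟩ ⟨_, hd⟩)).trans
      ((Adj.reachable (G := R.induce N) (u := ⟨inl _, hd⟩) (v := ⟨inr ⟨d, _⟩, _⟩)
        ⟨⟨s, hs, hds⟩, rfl⟩).trans (hinr p hpv).symm)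
  · have hTv := td.conn v trivial
    have hvS : ∀ t, v ∈ td.bag t → t ∉ S := fun t ht hts => hv (Set.mem_biUnion hts ht)
    obtain ⟨t₀, ht₀⟩ := hTv.nonempty
    refine (connected_iff_exists_forall_reachable _).mpr ⟨⟨inr ⟨t₀, hvS t₀ ht₀⟩, ht₀⟩, ?_⟩
    rintro ⟨j | t, hk⟩
    · exact absurd (td'.bag_sub j hk) hv
    obtain ⟨w, hw⟩ := hTv.exists_walk_of_induce ht₀ (show v ∈ td.bag t from hk)
    exact hinr w fun x hx => ⟨hvS x (hw x hx), hw x hx⟩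

def replaceSubtree (hS : (td.T.induce S).Connected)
    (hf : ∀ t : ↥Sᶜ, td.bag t ∩ (⋃ s ∈ S, td.bag s) ⊆ td'.bag (f t)) :
    TreeDecompOn V (J ⊕ ↥Sᶜ) Set.univ
      (G₁ ⊔ fromRel fun u v => ∃ t ∉ S, u ∈ td.bag t ∧ v ∈ td.bag t) where
  T := td.T.replaceSubtree S td'.T f
  isTree := td.isTree.replaceSubtree hS td'.isTree
  bag := Sum.elim td'.bag fun t => td.bag t
  bag_sub _ := Set.subset_univ _
  cover := by
    rintro u v (h | ⟨-, ⟨t, ht, hu, hv⟩ | ⟨t, ht, hv, hu⟩⟩)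
    · obtain ⟨j, hj⟩ := td'.cover h
      exact ⟨inl j, hj⟩
    all_goals exact ⟨inr ⟨t, ht⟩, hu, hv⟩
  conn v _ := td.connected_induce_replaceSubtree td' f hf v

end TreeDecompOn

theorem stmt_6_general {V I J : Type} [Fintype V] (G G' : SimpleGraph V) (W : ℕ)
    (td : TreeDecompOn V I Set.univ G)
    (hW : ∀ t : I, (td.bag t).ncard ≤ W + 1)
    (S : Set I) (hS : (td.T.induce S).Connected)
    (td' : TreeDecompOn V J (⋃ t ∈ S, td.bag t)
      (G' ⊔ SimpleGraph.fromRel (fun u v =>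
        u ∈ ⋃ t ∈ S, td.bag t ∧ v ∈ ⋃ t ∈ S, td.bag t ∧
        ∃ t, t ∉ S ∧ u ∈ td.bag t ∧ v ∈ td.bag t)))
    (hW' : ∀ j : J, (td'.bag j).ncard ≤ W + 1) :
    ∃ (K : Type) (tdH : TreeDecompOn V K Set.univ
        (G' ⊔ SimpleGraph.fromRel (fun u v =>
          G.Adj u v ∧ ∃ t, t ∉ S ∧ u ∈ td.bag t ∧ v ∈ td.bag t))),
      ∀ k : K, (tdH.bag k).ncard ≤ W + 1 := by
  -- for `t ∉ S`, the vertices of `bag t` over `S` are pairwise joined by virtual edges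
  have hf (t : ↥Sᶜ) : ∃ j, td.bag t ∩ (⋃ s ∈ S, td.bag s) ⊆ td'.bag j :=
    td'.exists_subset_bag (Set.toFinite _) Set.inter_subset_right fun u hu v hv huv =>
      .inr ⟨huv, .inl ⟨hu.2, hv.2, t, t.2, hu.1, hv.1⟩⟩
  choose f hf using hf
  refine ⟨_, (td.replaceSubtree td' f hS hf).ofLE ?_, ?_⟩
  · rintro u v (h | ⟨huv, h⟩)
    · exact .inl (.inl h)
    · exact .inr ⟨huv, h.imp (fun ⟨_, h⟩ => h) fun ⟨_, h⟩ => h⟩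
  · rintro (j | t)
    exacts [hW' j, hW t]

/-- Replacing the part of `G` inside `V_S` by a new graph `G'` on `V_S` keeps the
treewidth bounded by `W`, provided `G'` together with all virtual edges admits a
tree decomposition of width `≤ W` and the original decomposition has width `≤ W`.
The resulting graph `H` consists of the edges of `G'` together with all edges of
`G` covered by a bag outside `S`. -/
theorem stmt_6 {V I J : Type} [Fintype V] (G G' : SimpleGraph V) (W : ℕ)
    (td : TreeDecompOn V I Set.univ G)
    (hW : ∀ t : I, (td.bag t).ncard ≤ W + 1)
    (S : Set I) (hS : (td.T.induce S).Connected)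
    (hG' : ∀ u v : V, G'.Adj u v →
      u ∈ ⋃ t ∈ S, td.bag t ∧ v ∈ ⋃ t ∈ S, td.bag t)
    (td' : TreeDecompOn V J (⋃ t ∈ S, td.bag t)
      (G' ⊔ SimpleGraph.fromRel (fun u v =>
        u ∈ ⋃ t ∈ S, td.bag t ∧ v ∈ ⋃ t ∈ S, td.bag t ∧
        ∃ t, t ∉ S ∧ u ∈ td.bag t ∧ v ∈ td.bag t)))
    (hW' : ∀ j : J, (td'.bag j).ncard ≤ W + 1) :
    ∃ (K : Type) (tdH : TreeDecompOn V K Set.univ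
        (G' ⊔ SimpleGraph.fromRel (fun u v =>
          G.Adj u v ∧ ∃ t, t ∉ S ∧ u ∈ td.bag t ∧ v ∈ td.bag t))),
      ∀ k : K, (tdH.bag k).ncard ≤ W + 1 :=
  stmt_6_general G G' W td hW S hS td' hW'
end

section
/- Let G be a graph on a finite vertex set V with a linear elimination order, and suppose H ⊇ G is a supergraph of G on V closed under fill-in: whenever {u,v} and {u,w} are edges of H with u preceding both v and w in the order, then {v,w} is an edge of H. If every vertex of V has at most W neighbors in H that come later in the order, then the treewidth of G is at most W. -/
/-!
Eliminate the vertices in increasing order and hang each vertex `v` below its earliest later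
`H`-neighbour (below an extra root `⊤` if there is none). Since parents are later than their
children, this is a tree. The bags containing a fixed vertex `v` are those of `v` and of the
earlier `H`-neighbours of `v`; closure under fill-in shows that the parent of such an earlier
neighbour is again `v` or an earlier neighbour of `v`, so these bags form a subtree.
-/

open SimpleGraph Relation

def TreeDecomp.ofLE {V I : Type} {G H : SimpleGraph V} (td : TreeDecomp V I H) (h : G ≤ H) :
    TreeDecomp V I G :=
  { td with cover := fun _ _ huv => td.cover (h huv) }

namespace SimpleGraph

section ParentGraph

variable {α : Type*} (p : α → α)

def parentGraph : SimpleGraph α :=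
  fromEdgeSet (Set.range fun a => s(a, p a))

variable {p}

lemma parentGraph_adj {a b : α} : (parentGraph p).Adj a b ↔ (p a = b ∨ p b = a) ∧ a ≠ b := by
  simp only [parentGraph, fromEdgeSet_adj, Set.mem_range, Sym2.eq_iff]
  refine and_congr_left fun _ => ⟨?_, ?_⟩
  · rintro ⟨y, ⟨rfl, rfl⟩ | ⟨rfl, rfl⟩⟩
    exacts [.inl rfl, .inr rfl]
  · rintro (rfl | rfl)
    exacts [⟨a, .inl ⟨rfl, rfl⟩⟩, ⟨b, .inr ⟨rfl, rfl⟩⟩]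

variable [LinearOrder α]

lemma le_of_reflTransGen_parent (hp : ∀ a, a ≤ p a) {a b : α}
    (h : ReflTransGen (fun x y => p x = y) a b) : a ≤ b := by
  induction h with
  | refl => exact le_rfl
  | tail _ hbc ih => exact hbc ▸ ih.trans (hp _)

lemma parentGraph_isBridge (hp : ∀ a, a ≤ p a) {a : α} (ha : a ≠ p a) :
    (parentGraph p).IsBridge s(a, p a) := by
  rw [isBridge_iff, reachable_iff_reflTransGen]
  intro h
  -- Without the edge `s(a, p a)`, every neighbour of a descendant of `a` is a descendant of `a`.
  have closed : ∀ x y, ((parentGraph p).deleteEdges {s(a, p a)}).Adj x y →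
      ReflTransGen (fun x y => p x = y) x a → ReflTransGen (fun x y => p x = y) y a := by
    intro x y hxy hx
    obtain ⟨hxy, hne⟩ := deleteEdges_adj.1 hxy
    obtain ⟨rfl | rfl, -⟩ := parentGraph_adj.1 hxy
    · rcases hx.cases_head with rfl | ⟨z, rfl, hz⟩
      · exact absurd rfl hne
      · exact hz
    · exact hx.head rfl
  have descendant : ∀ y, ReflTransGen ((parentGraph p).deleteEdges {s(a, p a)}).Adj a y →
      ReflTransGen (fun x y => p x = y) y a := by
    intro y hy
    induction hy with
    | refl => exact .refl
    | tail _ hyz ih => exact closed _ _ hyz ih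
  exact ha ((hp a).antisymm (le_of_reflTransGen_parent hp (descendant _ h)))

lemma parentGraph_isAcyclic (hp : ∀ a, a ≤ p a) : (parentGraph p).IsAcyclic := by
  rw [isAcyclic_iff_forall_adj_isBridge]
  intro a b hab
  obtain ⟨rfl | rfl, hne⟩ := parentGraph_adj.1 hab
  · exact parentGraph_isBridge hp hne
  · rw [Sym2.eq_swap]
    exact parentGraph_isBridge hp hne.symm

lemma parentGraph_induce_connected [WellFoundedGT α] {S : Set α} {r : α} (hr : r ∈ S)
    (hS : ∀ a ∈ S, a ≠ r → a < p a ∧ p a ∈ S) : ((parentGraph p).induce S).Connected := by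
  have reach : ∀ a (ha : a ∈ S), ((parentGraph p).induce S).Reachable ⟨r, hr⟩ ⟨a, ha⟩ := by
    intro a
    induction a using WellFoundedGT.induction with
    | _ a ih =>
      intro ha
      rcases eq_or_ne a r with rfl | har
      · rfl
      obtain ⟨hlt, hpa⟩ := hS a ha har
      have hadj : ((parentGraph p).induce S).Adj ⟨p a, hpa⟩ ⟨a, ha⟩ :=
        induce_adj.2 (parentGraph_adj.2 ⟨Or.inr rfl, hlt.ne'⟩)
      exact (ih (p a) hlt hpa).trans hadj.reachable
  exact (connected_iff_exists_forall_reachable _).2 ⟨⟨r, hr⟩, fun ⟨a, ha⟩ => reach a ha⟩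

lemma parentGraph_isTree [Finite α] (hp : ∀ a, a ≤ p a) {r : α} (hr : ∀ a, a ≠ r → a < p a) :
    (parentGraph p).IsTree :=
  ⟨(induceUnivIso _).connected_iff.1 <|
      parentGraph_induce_connected (Set.mem_univ r) fun a _ ha => ⟨hr a ha, trivial⟩,
    parentGraph_isAcyclic hp⟩

end ParentGraph

section Elimination

variable {V : Type} [Fintype V] [LinearOrder V] (H : SimpleGraph V) [DecidableRel H.Adj]

def laterNeighborFinset (v : V) : Finset V := {w | H.Adj v w ∧ v < w}

variable {H}

@[simp]
lemma mem_laterNeighborFinset {v w : V} : w ∈ H.laterNeighborFinset v ↔ H.Adj v w ∧ v < w := by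
  simp [laterNeighborFinset]

lemma coe_laterNeighborFinset (v : V) :
    (H.laterNeighborFinset v : Set V) = {w | H.Adj v w ∧ v < w} := by
  ext; simp

variable (H)

def eliminationParent : WithTop V → WithTop V
  | ⊤ => ⊤
  | (v : V) => (H.laterNeighborFinset v).min

def eliminationBag : WithTop V → Set V
  | ⊤ => ∅
  | (v : V) => insert v (H.laterNeighborFinset v)

variable {H}

lemma lt_eliminationParent {t : WithTop V} (ht : t ≠ ⊤) : t < H.eliminationParent t := by
  lift t to V using ht
  cases h : (H.laterNeighborFinset t).min with
  | top => simp [eliminationParent, h]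
  | coe w =>
    simpa [eliminationParent, h] using (mem_laterNeighborFinset.1 (Finset.mem_of_min h)).2

lemma le_eliminationParent (t : WithTop V) : t ≤ H.eliminationParent t := by
  rcases eq_or_ne t ⊤ with rfl | ht
  · exact le_top
  · exact (lt_eliminationParent ht).le

lemma mem_eliminationBag_parent
    (hfill : ∀ u v w : V, H.Adj u v → H.Adj u w → u < v → u < w → v ≠ w → H.Adj v w)
    {v : V} {t : WithTop V} (hv : v ∈ H.eliminationBag t) (ht : t ≠ v) :
    v ∈ H.eliminationBag (H.eliminationParent t) := by
  induction t with
  | top => simp [eliminationBag] at hv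
  | coe u =>
    have hvu : v ∈ H.laterNeighborFinset u := by
      simpa [eliminationBag, Ne.symm (WithTop.coe_injective.ne_iff.1 ht)] using hv
    obtain ⟨w, hw⟩ := Finset.min_of_mem hvu
    have hwu := mem_laterNeighborFinset.1 (Finset.mem_of_min hw)
    have hwv : w ≤ v := Finset.min_le_of_eq hvu hw
    have hv' := mem_laterNeighborFinset.1 hvu
    simp only [eliminationParent, hw, eliminationBag, Set.mem_insert_iff, Finset.mem_coe,
      mem_laterNeighborFinset]
    rcases eq_or_ne v w with hvw | hvw
    · exact Or.inl hvw
    · exact Or.inr ⟨hfill u w v hwu.1 hv'.1 hwu.2 hv'.2 hvw.symm, lt_of_le_of_ne hwv hvw.symm⟩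

variable (H) in
def eliminationTreeDecomp
    (hfill : ∀ u v w : V, H.Adj u v → H.Adj u w → u < v → u < w → v ≠ w → H.Adj v w) :
    TreeDecomp V (WithTop V) H where
  T := parentGraph H.eliminationParent
  isTree := parentGraph_isTree le_eliminationParent (r := ⊤) fun _ => lt_eliminationParent
  bag := H.eliminationBag
  cover u v huv := by
    rcases huv.ne.lt_or_gt with h | h
    · exact ⟨u, by simp [eliminationBag, huv, h]⟩
    · exact ⟨v, by simp [eliminationBag, huv.symm, h]⟩
  conn v := parentGraph_induce_connected (r := (v : WithTop V)) (by simp [eliminationBag])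
    fun t ht htv => ⟨lt_eliminationParent (by rintro rfl; simp [eliminationBag] at ht),
      mem_eliminationBag_parent hfill ht htv⟩

lemma ncard_eliminationBag_le {W : ℕ} (hdeg : ∀ v : V, {w : V | H.Adj v w ∧ v < w}.ncard ≤ W)
    (t : WithTop V) : (H.eliminationBag t).ncard ≤ W + 1 := by
  induction t with
  | top => simp [eliminationBag]
  | coe v =>
    calc (H.eliminationBag v).ncard ≤ (H.laterNeighborFinset v : Set V).ncard + 1 :=
          Set.ncard_insert_le _ _
      _ ≤ W + 1 := by rw [coe_laterNeighborFinset]; exact Nat.add_le_add_right (hdeg v) 1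

end Elimination

end SimpleGraph

/-- Samer–Veith elimination-ordering correctness: if `H` is a supergraph of `G`
on a linearly ordered finite vertex set that is closed under fill-in (whenever
`u` is adjacent to two later vertices `v` and `w`, then `v` and `w` are
adjacent), and every vertex has at most `W` later neighbors in `H`, then `G` has
treewidth at most `W`, i.e. it admits a tree decomposition all of whose bags
have size at most `W + 1`. -/
theorem stmt_16 {V : Type} [Fintype V] [LinearOrder V]
    (G H : SimpleGraph V) (W : ℕ)
    (hsub : G ≤ H)
    (hfill : ∀ u v w : V, H.Adj u v → H.Adj u w → u < v → u < w → v ≠ w →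
      H.Adj v w)
    (hdeg : ∀ v : V, {w : V | H.Adj v w ∧ v < w}.ncard ≤ W) :
    ∃ (K : Type) (td : TreeDecomp V K G), ∀ k : K, (td.bag k).ncard ≤ W + 1 := by
  classical
  exact ⟨WithTop V, (H.eliminationTreeDecomp hfill).ofLE hsub, H.ncard_eliminationBag_le hdeg⟩
end
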